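/- Let N ∈ ℕ and let f, g : [0,1] → ℝ^N be continuous. Then for every m ≥ 1, Σ_{I : |I| = m} S^I(f) · S^I(g) = ∫_{Δ^m × Δ^m} ∏_{i=1}^{m} ⟨f(s_i), g(t_i)⟩ ds_1⋯ds_m dt_1⋯dt_m, where the sum is over all multi-indices I of length m with entries in {1,…,N}, ⟨·,·⟩ is the Euclidean inner product on ℝ^N, and Δ^m is the standard m-simplex. Consequently, the truncated signature kernel satisfies K_M(f,g) := Σ_{m=0}^{M} Σ_{|I|=m} S^I(f) S^I(g) = Σ_{m=0}^{M} ∫_{Δ^m × Δ^m} ∏_{i=1}^{m} ⟨f(s_i), g(t_i)⟩ ds dt. -/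

import Mathlib

/-!
Expanding the product of inner products `∏ᵢ Σ_c f_c(sᵢ) g_c(tᵢ)` over all choices of
coordinates gives `Σ_I (∏ᵢ f_{Iᵢ}(sᵢ)) (∏ᵢ g_{Iᵢ}(tᵢ))`; integrating over `Δᵐ × Δᵐ`,
swapping the finite sum with the integral and applying Fubini to each product of a function
of `s` and a function of `t` yields `Σ_I S^I(f) S^I(g)`. Continuity on `[0,1]` and compactness
of the simplex supply the integrability needed for the swap.
-/

open MeasureTheory

/-- The standard simplex of nondecreasing `m`-tuples with entries in `[0,1]`. -/
def simplex (m : ℕ) : Set (Fin m → ℝ) :=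
  {t | (∀ j, t j ∈ Set.Icc (0:ℝ) 1) ∧ ∀ j k : Fin m, j ≤ k → t j ≤ t k}

/-- The signature coefficient of `f : [0,1] → ℝ^N` with respect to a multi-index;
for the empty multi-index it equals `1`. -/
noncomputable def sig {N : ℕ} (f : ℝ → Fin N → ℝ) {m : ℕ} (I : Fin m → Fin N) : ℝ :=
  ∫ t in simplex m, ∏ j, f (t j) (I j)

lemma isCompact_simplex (m : ℕ) : IsCompact (simplex m) := by
  have hsub : simplex m ⊆ Set.Icc 0 1 := fun t ht => ⟨fun j => (ht.1 j).1, fun j => (ht.1 j).2⟩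
  have hclosed : IsClosed (simplex m) := by
    simp only [simplex, Set.ofPred_and, Set.ofPred_forall]
    exact (isClosed_iInter fun j => isClosed_Icc.preimage (continuous_apply j)).inter
      (isClosed_iInter fun j => isClosed_iInter fun k => isClosed_iInter fun _ =>
        isClosed_le (continuous_apply j) (continuous_apply k))
  exact isCompact_Icc.of_isClosed_subset hclosed hsub

lemma integrableOn_simplex_prod_apply {N m : ℕ} {f : ℝ → Fin N → ℝ}
    (hf : ContinuousOn f (Set.Icc 0 1)) (I : Fin m → Fin N) :
    IntegrableOn (fun t : Fin m → ℝ => ∏ j, f (t j) (I j)) (simplex m) := by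
  refine ContinuousOn.integrableOn_compact (isCompact_simplex m) ?_
  refine continuousOn_finsetProd _ fun j _ => ?_
  exact (continuous_apply (I j)).comp_continuousOn
    (hf.comp (continuous_apply j).continuousOn fun t ht => ht.1 j)

lemma sig_mul_sig {N m : ℕ} (f g : ℝ → Fin N → ℝ) (I : Fin m → Fin N) :
    sig f I * sig g I =
      ∫ p in simplex m ×ˢ simplex m, (∏ j, f (p.1 j) (I j)) * ∏ j, g (p.2 j) (I j) := by
  rw [Measure.volume_eq_prod]
  exact (setIntegral_prod_mul (fun s : Fin m → ℝ => ∏ j, f (s j) (I j))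
    (fun t : Fin m → ℝ => ∏ j, g (t j) (I j)) _ _).symm

lemma prod_sum_mul_eq_sum_prod_mul_prod {ι κ R : Type*} [Fintype ι] [DecidableEq ι]
    [Fintype κ] [CommSemiring R] (a b : ι → κ → R) :
    ∏ i, ∑ c, a i c * b i c = ∑ I : ι → κ, (∏ i, a i (I i)) * ∏ i, b i (I i) := by
  simp only [Fintype.prod_sum, Finset.prod_mul_distrib]

theorem sum_sig_mul_sig {N : ℕ} {f g : ℝ → Fin N → ℝ}
    (hf : ContinuousOn f (Set.Icc 0 1)) (hg : ContinuousOn g (Set.Icc 0 1)) (m : ℕ) :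
    ∑ I : Fin m → Fin N, sig f I * sig g I =
      ∫ p in simplex m ×ˢ simplex m, ∏ i, ∑ c, f (p.1 i) c * g (p.2 i) c := by
  have hint : ∀ I : Fin m → Fin N,
      IntegrableOn (fun p : (Fin m → ℝ) × (Fin m → ℝ) =>
        (∏ j, f (p.1 j) (I j)) * ∏ j, g (p.2 j) (I j)) (simplex m ×ˢ simplex m) := by
    intro I
    rw [IntegrableOn, Measure.volume_eq_prod, ← Measure.prod_restrict]
    exact (integrableOn_simplex_prod_apply hf I).mul_prod (integrableOn_simplex_prod_apply hg I)
  simp only [sig_mul_sig, prod_sum_mul_eq_sum_prod_mul_prod]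
  exact (integral_finsetSum _ fun I _ => hint I).symm

/-- **Inner-product formula for the signature kernel**: for every `m ≥ 1`,
`Σ_{|I|=m} S^I(f) S^I(g) = ∫_{Δ^m × Δ^m} ∏_i ⟨f(s_i), g(t_i)⟩ ds dt`, and
consequently the truncated signature kernel satisfies
`K_M(f,g) = Σ_{m=0}^M Σ_{|I|=m} S^I(f) S^I(g)
          = Σ_{m=0}^M ∫_{Δ^m × Δ^m} ∏_i ⟨f(s_i), g(t_i)⟩ ds dt`. -/
theorem signature_kernel_formula (N : ℕ) (f g : ℝ → Fin N → ℝ)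
    (hf : ContinuousOn f (Set.Icc 0 1)) (hg : ContinuousOn g (Set.Icc 0 1)) :
    (∀ m : ℕ, 1 ≤ m →
      ∑ I : Fin m → Fin N, sig f I * sig g I =
        ∫ p in (simplex m) ×ˢ (simplex m),
          ∏ i, ∑ c, f (p.1 i) c * g (p.2 i) c) ∧
    (∀ M : ℕ,
      ∑ m ∈ Finset.range (M + 1), ∑ I : Fin m → Fin N, sig f I * sig g I =
        ∑ m ∈ Finset.range (M + 1),
          ∫ p in (simplex m) ×ˢ (simplex m),
            ∏ i, ∑ c, f (p.1 i) c * g (p.2 i) c) :=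
  ⟨fun m _ => sum_sig_mul_sig hf hg m,
    fun _ => Finset.sum_congr rfl fun m _ => sum_sig_mul_sig hf hg m⟩
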